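/- For s ∈ ℂ with Re(s) > 1, the Riemann zeta function satisfies ζ(s) = 1 + ∑_{k=1}^{∞} a_k(s) · (p k)^(-s), where p k is the k-th prime and a_k(s) = ∏_{j=k}^{∞} (1 - (p j)^(-s))⁻¹. -/

import Mathlib

/-- `nthPrime k` is the k-th prime, indexed from 1 (so `nthPrime 1 = 2`). -/
noncomputable def nthPrime (k : ℕ) : ℕ := Nat.nth Nat.Prime (k - 1)

/-- `a k s = ∏_{j ≥ k} (1 - (p j)^(-s))⁻¹`, the tail product starting at the k-th prime. -/
noncomputable def a (k : ℕ) (s : ℂ) : ℂ :=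
  ∏' j : ℕ, (1 - (nthPrime (k + j) : ℂ) ^ (-s))⁻¹

/-!
With `x k = (p k)^(-s)`, the tail products `A k = ∏_{j ≥ k} (1 - x j)⁻¹` satisfy
`A k = (1 - x k)⁻¹ * A (k + 1)`, i.e. `A k * x k = A k - A (k + 1)`. The series therefore
telescopes to `A 1 - lim A k`. The Euler product gives `A 1 = ζ(s)`. Since the `x j` are summable,
`∏ (1 - x j)` converges to a nonzero limit (the exponential of the series of logarithms), and
`A k` is its `k`-th partial product divided by that limit, so `A k → 1`.
-/

open Filter Topology Finset

theorem hasSum_of_eq_sub_succ_of_tendsto {E : Type*} [SeminormedAddCommGroup E] {f u : ℕ → E}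
    {l : E} (hf : ∀ n, f n = u n - u (n + 1)) (hs : Summable fun n => ‖f n‖)
    (hu : Tendsto u atTop (𝓝 l)) : HasSum f (u 0 - l) := by
  rw [hasSum_iff_tendsto_nat_of_summable_norm hs]
  simpa only [hf, sum_range_sub'] using tendsto_const_nhds.sub hu

namespace Complex

variable {x : ℕ → ℂ}

theorem hasProd_one_sub_of_summable (hx : Summable x) (hx1 : ∀ n, x n ≠ 1) :
    ∃ Q ≠ 0, HasProd (fun n => 1 - x n) Q := by
  have hlog : Summable fun n => log (1 - x n) := by
    simpa only [sub_eq_add_neg] using summable_log_one_add_of_summable hx.neg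
  exact ⟨_, exp_ne_zero _, hasProd_of_hasSum_log (fun n => sub_ne_zero.2 (hx1 n).symm) hlog.hasSum⟩

theorem tprod_one_sub_inv_nat_add (hx : Summable x) (hx1 : ∀ n, x n ≠ 1) (n : ℕ) :
    ∏' j, (1 - x (j + n))⁻¹ = (∏ j ∈ range n, (1 - x j)) / ∏' j, (1 - x j) := by
  obtain ⟨Q, hQ, hprod⟩ := hasProd_one_sub_of_summable hx hx1
  obtain ⟨T, hT, htail⟩ :=
    hasProd_one_sub_of_summable ((summable_nat_add_iff n).2 hx) fun j => hx1 (j + n)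
  have hsplit : (∏ j ∈ range n, (1 - x j)) * T = Q := htail.prod_range_mul.unique hprod
  have hP : ∏ j ∈ range n, (1 - x j) ≠ 0 := left_ne_zero_of_mul (hsplit ▸ hQ)
  rw [(htail.inv₀ hT).tprod_eq, hprod.tprod_eq, ← hsplit, div_mul_cancel_left₀ hP]

theorem hasSum_mul_tprod_one_sub_inv_nat_add (hx : Summable x) (hx1 : ∀ n, x n ≠ 1) :
    HasSum (fun n => x n * ∏' j, (1 - x (j + n))⁻¹) ((∏' j, (1 - x j)⁻¹) - 1) := by
  obtain ⟨Q, hQ, hprod⟩ := hasProd_one_sub_of_summable hx hx1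
  have hA (n : ℕ) : ∏' j, (1 - x (j + n))⁻¹ = (∏ j ∈ range n, (1 - x j)) / Q := by
    rw [tprod_one_sub_inv_nat_add hx hx1, hprod.tprod_eq]
  have htelescope (n : ℕ) : x n * ∏' j, (1 - x (j + n))⁻¹ =
      ∏' j, (1 - x (j + n))⁻¹ - ∏' j, (1 - x (j + (n + 1)))⁻¹ := by
    rw [hA, hA, prod_range_succ]
    ring
  have hlim : Tendsto (fun n => ∏' j, (1 - x (j + n))⁻¹) atTop (𝓝 1) := by
    have := hprod.tendsto_prod_nat.div_const Q
    rwa [div_self hQ, ← funext hA] at this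
  have hbdd : ∀ᶠ n in cofinite, ‖‖x n * ∏' j, (1 - x (j + n))⁻¹‖‖ ≤ 2 * ‖x n‖ := by
    rw [Nat.cofinite_eq_atTop]
    filter_upwards [hlim.norm.eventually (gt_mem_nhds (by norm_num : ‖(1 : ℂ)‖ < 2))] with n hn
    rw [norm_norm, norm_mul, mul_comm]
    gcongr
  simpa only [add_zero] using hasSum_of_eq_sub_succ_of_tendsto htelescope
    ((hx.norm.mul_left 2).of_norm_bounded_eventually hbdd) hlim

end Complex

noncomputable def Nat.Primes.nthEquiv : ℕ ≃ Nat.Primes where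
  toFun n := ⟨Nat.nth Nat.Prime n, Nat.prime_nth_prime n⟩
  invFun p := Nat.count Nat.Prime p
  left_inv := Nat.count_nth_of_infinite Nat.infinite_setOfPred_prime
  right_inv p := Subtype.ext (Nat.nth_count p.2)

theorem riemannZeta_eq_tprod_nth_prime {s : ℂ} (hs : 1 < s.re) :
    riemannZeta s = ∏' n, (1 - (Nat.nth Nat.Prime n : ℂ) ^ (-s))⁻¹ := by
  rw [← riemannZeta_eulerProduct_tprod hs,
    ← Nat.Primes.nthEquiv.tprod_eq fun p : Nat.Primes => (1 - (p : ℂ) ^ (-s))⁻¹]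
  rfl

theorem summable_nth_prime_cpow_neg {s : ℂ} (hs : 1 < s.re) :
    Summable fun n => (Nat.nth Nat.Prime n : ℂ) ^ (-s) := by
  have := (Complex.summable_one_div_nat_cpow.2 hs).comp_injective
    (Nat.nth_injective Nat.infinite_setOfPred_prime)
  simpa only [Function.comp_def, one_div, Complex.cpow_neg] using this

theorem nth_prime_cpow_neg_ne_one {s : ℂ} (hs : 0 < s.re) (n : ℕ) :
    (Nat.nth Nat.Prime n : ℂ) ^ (-s) ≠ 1 := by
  have hp := Nat.prime_nth_prime n
  intro h
  have hnorm := congrArg norm h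
  rw [Complex.norm_natCast_cpow_of_pos hp.pos, norm_one, Complex.neg_re] at hnorm
  exact (Real.rpow_lt_one_of_one_lt_of_neg (by exact_mod_cast hp.one_lt) (by linarith)).ne hnorm

theorem nthPrime_add_one (k : ℕ) : nthPrime (k + 1) = Nat.nth Nat.Prime k := rfl

theorem a_add_one (n : ℕ) (s : ℂ) :
    a (n + 1) s = ∏' j, (1 - (Nat.nth Nat.Prime (j + n) : ℂ) ^ (-s))⁻¹ :=
  tprod_congr fun j => by rw [show n + 1 + j = j + n + 1 by ring, nthPrime_add_one]

theorem zeta_eq_one_add_tsum (s : ℂ) (hs : 1 < s.re) :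
    riemannZeta s = 1 + ∑' k : ℕ, a (k + 1) s * (nthPrime (k + 1) : ℂ) ^ (-s) := by
  have htelescope := Complex.hasSum_mul_tprod_one_sub_inv_nat_add
    (summable_nth_prime_cpow_neg hs) (nth_prime_cpow_neg_ne_one (by linarith))
  have hterms : ∑' k : ℕ, a (k + 1) s * (nthPrime (k + 1) : ℂ) ^ (-s) =
      ∑' k, (Nat.nth Nat.Prime k : ℂ) ^ (-s) *
        ∏' j, (1 - (Nat.nth Nat.Prime (j + k) : ℂ) ^ (-s))⁻¹ :=
    tsum_congr fun k => by rw [a_add_one, nthPrime_add_one, mul_comm]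
  rw [hterms, htelescope.tsum_eq, riemannZeta_eq_tprod_nth_prime hs]
  ring
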